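/- Let C be a spherical cap of the unit sphere S of sufficiently small diameter, P the plane through the center of the sphere parallel to the boundary circle of C, and π : C → P the orthogonal projection. Then for every 0 < m < 1 there exists d > 0 such that if C has diameter less than d, then for all distinct points A, B ∈ C, the distance |π(A) − π(B)| > m·|A − B|. -/

import Mathlib

noncomputable section
open MeasureTheory Metric
open scoped RealInnerProductSpace

/-- The ambient Euclidean space ℝ³. -/
abbrev E3 := EuclideanSpace ℝ (Fin 3)

/-- The rotation group SO(3): orthogonal 3×3 real matrices of determinant 1. -/
def SO3 : Subgroup (Matrix.orthogonalGroup (Fin 3) ℝ) :=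
  MonoidHom.ker (Matrix.detMonoidHom.comp (Submonoid.subtype _))

instance : MeasurableSpace SO3 := borel _
instance : BorelSpace SO3 := ⟨rfl⟩

/-- The normalized surface measure on the unit sphere in ℝ³ (total mass 1):
the 2-dimensional Hausdorff measure restricted to the sphere, divided by 4π. -/
def sigma3 : Measure E3 :=
  (ENNReal.ofReal (4 * Real.pi))⁻¹ • (μH[2]).restrict (Metric.sphere 0 1)

/-- The action of a rotation on a vector of ℝ³. -/
def rot (g : SO3) (v : E3) : E3 := WithLp.toLp 2 ((g.1 : Matrix (Fin 3) (Fin 3) ℝ).mulVec v)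

/-!
Write `a = ⟪u, A⟫`, `b = ⟪u, B⟫` and `π = projPerp u` for the projection. By Pythagoras
`|A - B|² = |πA - πB|² + (a - b)²`, and on the unit sphere `|πA|² = 1 - a²`, so
`|a - b| (a + b) = | |πB|² - |πA|² | ≤ |πA - πB| (|πA| + |πB|)`.
A cap of diameter `< d ≤ 1` contains its pole `u`, hence `|πA|, |πB| < d` and `a + b ≥ 1`.
Thus `|a - b| ≤ 2d |πA - πB|` and `|A - B|² ≤ (1 + 4d²) |πA - πB|²`, which beats `m` once
`m² (1 + 4d²) < 1`.
-/

section Projection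

variable {E : Type*} [NormedAddCommGroup E] [InnerProductSpace ℝ E]

def projPerp (u x : E) : E := x - ⟪u, x⟫ • u

theorem projPerp_sub (u x y : E) : projPerp u x - projPerp u y = projPerp u (x - y) := by
  simp only [projPerp, inner_sub_right, sub_smul]
  abel

theorem projPerp_self {u : E} (hu : ‖u‖ = 1) : projPerp u u = 0 := by
  simp [projPerp, hu]

theorem norm_projPerp_sq_add_inner_sq {u : E} (hu : ‖u‖ = 1) (x : E) :
    ‖projPerp u x‖ ^ 2 + ⟪u, x⟫ ^ 2 = ‖x‖ ^ 2 := by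
  rw [projPerp, norm_sub_sq_real, inner_smul_right, real_inner_comm, norm_smul, hu,
    Real.norm_eq_abs, mul_one, sq_abs]
  ring

theorem norm_projPerp_le {u : E} (hu : ‖u‖ = 1) (x : E) : ‖projPerp u x‖ ≤ ‖x‖ :=
  le_of_pow_le_pow_left₀ two_ne_zero (norm_nonneg _) <| by
    nlinarith [norm_projPerp_sq_add_inner_sq hu x, sq_nonneg ⟪u, x⟫]

theorem norm_projPerp_le_dist {u : E} (hu : ‖u‖ = 1) (x : E) : ‖projPerp u x‖ ≤ dist x u := by
  rw [dist_eq_norm, ← sub_zero (projPerp u x), ← projPerp_self hu, projPerp_sub]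
  exact norm_projPerp_le hu _

variable {u A B : E}

theorem inner_eq_one_sub_dist_sq (hu : ‖u‖ = 1) (hA : ‖A‖ = 1) :
    ⟪u, A⟫ = 1 - dist A u ^ 2 / 2 := by
  rw [dist_eq_norm, norm_sub_sq_real, hA, hu, real_inner_comm]
  ring

theorem abs_inner_sub_mul_inner_add_le (hu : ‖u‖ = 1) (hA : ‖A‖ = 1) (hB : ‖B‖ = 1) :
    |⟪u, A⟫ - ⟪u, B⟫| * (⟪u, A⟫ + ⟪u, B⟫) ≤
      ‖projPerp u A - projPerp u B‖ * (‖projPerp u A‖ + ‖projPerp u B‖) := by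
  have hA' := norm_projPerp_sq_add_inner_sq hu A
  have hB' := norm_projPerp_sq_add_inner_sq hu B
  rw [hA] at hA'
  rw [hB] at hB'
  have hdiff : |⟪u, A⟫ - ⟪u, B⟫| * |⟪u, A⟫ + ⟪u, B⟫| =
      |‖projPerp u B‖ - ‖projPerp u A‖| * (‖projPerp u A‖ + ‖projPerp u B‖) := by
    rw [← abs_mul, ← abs_of_nonneg (by positivity : 0 ≤ ‖projPerp u A‖ + ‖projPerp u B‖),
      ← abs_mul]
    congr 1
    linear_combination hA' - hB'
  calc |⟪u, A⟫ - ⟪u, B⟫| * (⟪u, A⟫ + ⟪u, B⟫)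
      ≤ |⟪u, A⟫ - ⟪u, B⟫| * |⟪u, A⟫ + ⟪u, B⟫| :=
        mul_le_mul_of_nonneg_left (le_abs_self _) (abs_nonneg _)
    _ = |‖projPerp u B‖ - ‖projPerp u A‖| * (‖projPerp u A‖ + ‖projPerp u B‖) := hdiff
    _ ≤ ‖projPerp u A - projPerp u B‖ * (‖projPerp u A‖ + ‖projPerp u B‖) := by
        gcongr
        rw [abs_sub_comm]
        exact abs_norm_sub_norm_le _ _

theorem dist_sq_le_of_dist_pole_le {d : ℝ} (hd : d ≤ 1) (hu : ‖u‖ = 1)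
    (hA : ‖A‖ = 1) (hB : ‖B‖ = 1) (hAu : dist A u ≤ d) (hBu : dist B u ≤ d) :
    dist A B ^ 2 ≤ (1 + 4 * d ^ 2) * dist (projPerp u A) (projPerp u B) ^ 2 := by
  have hpyth := norm_projPerp_sq_add_inner_sq hu (A - B)
  rw [← projPerp_sub, inner_sub_right] at hpyth
  rw [dist_eq_norm, dist_eq_norm, ← hpyth]
  have hpA := norm_projPerp_le_dist hu A
  have hpB := norm_projPerp_le_dist hu B
  have hsum : 1 ≤ ⟪u, A⟫ + ⟪u, B⟫ := by
    rw [inner_eq_one_sub_dist_sq hu hA, inner_eq_one_sub_dist_sq hu hB]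
    nlinarith [dist_nonneg (x := A) (y := u), dist_nonneg (x := B) (y := u)]
  have hkey : |⟪u, A⟫ - ⟪u, B⟫| ≤ 2 * d * ‖projPerp u A - projPerp u B‖ := by
    nlinarith [abs_inner_sub_mul_inner_add_le hu hA hB, abs_nonneg (⟪u, A⟫ - ⟪u, B⟫),
      norm_nonneg (projPerp u A - projPerp u B)]
  nlinarith [sq_abs (⟪u, A⟫ - ⟪u, B⟫), abs_nonneg (⟪u, A⟫ - ⟪u, B⟫)]

theorem dist_pole_lt_of_mem_cap (hu : ‖u‖ = 1) {c d : ℝ}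
    (hA : A ∈ {v : E | v ∈ sphere (0 : E) 1 ∧ c < ⟪u, v⟫})
    (hdiam : diam {v : E | v ∈ sphere (0 : E) 1 ∧ c < ⟪u, v⟫} < d) : dist A u < d := by
  have hc : c < 1 := hA.2.trans_le <| by
    simpa [hu, mem_sphere_zero_iff_norm.mp hA.1] using real_inner_le_norm u A
  have hpole : u ∈ {v : E | v ∈ sphere (0 : E) 1 ∧ c < ⟪u, v⟫} := by
    simpa [hu, real_inner_self_eq_norm_sq] using hc
  have hbdd : Bornology.IsBounded {v : E | v ∈ sphere (0 : E) 1 ∧ c < ⟪u, v⟫} :=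
    isBounded_sphere.subset fun _ hv => hv.1
  exact (dist_le_diam_of_mem hbdd hA hpole).trans_lt hdiam

end Projection

theorem mul_lt_of_sq_le_mul_sq {m K x y : ℝ} (hK : m ^ 2 * K < 1) (hx : 0 < x)
    (hy : 0 ≤ y) (hxy : x ^ 2 ≤ K * y ^ 2) : m * x < y := by
  have hy' : 0 < y ^ 2 := by
    rcases hy.lt_or_eq with hy | rfl
    · positivity
    · nlinarith [pow_pos hx 2]
  refine lt_of_pow_lt_pow_left₀ 2 hy ?_
  calc (m * x) ^ 2 = m ^ 2 * x ^ 2 := by ring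
    _ ≤ m ^ 2 * K * y ^ 2 := by rw [mul_assoc]; gcongr
    _ < y ^ 2 := by nlinarith

/-- For every `0 < m < 1` there is `d > 0` such that on any spherical cap
`C = S ∩ {v | c < ⟪u, v⟫}` of diameter less than `d`, the orthogonal projection
`v ↦ v - ⟪u, v⟫ • u` onto the plane through the origin parallel to the boundary circle
of the cap contracts distances by a factor of at most `m`. -/
theorem stmt_11 (m : ℝ) (hm0 : 0 < m) (hm1 : m < 1) :
    ∃ d > 0, ∀ (u : E3), ‖u‖ = 1 → ∀ c : ℝ,
      ∀ C : Set E3, C = {v : E3 | v ∈ Metric.sphere (0 : E3) 1 ∧ c < ⟪u, v⟫} →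
      Metric.diam C < d →
      ∀ A ∈ C, ∀ B ∈ C, A ≠ B →
        dist (A - ⟪u, A⟫ • u) (B - ⟪u, B⟫ • u) > m * dist A B := by
  set d := min 1 (√(1 - m ^ 2) / 2)
  have hm_sq : 0 < 1 - m ^ 2 := by nlinarith
  have hd0 : 0 < d := lt_min one_pos (by positivity)
  have hd1 : d ≤ 1 := min_le_left _ _
  have hd_sq : 4 * d ^ 2 ≤ 1 - m ^ 2 := by
    have h := pow_le_pow_left₀ (by positivity) (min_le_right 1 (√(1 - m ^ 2) / 2)) 2
    rw [div_pow, Real.sq_sqrt hm_sq.le] at h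
    linarith
  refine ⟨d, hd0, fun u hu c C hC hdiam A hA B hB hAB => ?_⟩
  subst hC
  have hAu := dist_pole_lt_of_mem_cap hu hA hdiam
  have hBu := dist_pole_lt_of_mem_cap hu hB hdiam
  have hA1 : ‖A‖ = 1 := mem_sphere_zero_iff_norm.mp hA.1
  have hB1 : ‖B‖ = 1 := mem_sphere_zero_iff_norm.mp hB.1
  have hK : m ^ 2 * (1 + 4 * d ^ 2) < 1 := by
    nlinarith [mul_le_mul_of_nonneg_left hd_sq (sq_nonneg m), pow_pos hm_sq 2]
  exact mul_lt_of_sq_le_mul_sq hK (dist_pos.mpr hAB) dist_nonneg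
    (dist_sq_le_of_dist_pole_le hd1 hu hA1 hB1 hAu.le hBu.le)
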